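/- arXiv:0910.2736 — 4 statements merged into one kernel-verified Lean document; each statement's English description precedes it below -/
import Mathlib

section
/- Let a, b, x : ℕ → ℂ be sequences with b_i ≠ 0 for all i, and suppose x satisfies the second-order linear difference equation x_{n+2} = b_n·x_{n+1} + a_n·x_n for all n ∈ ℕ. Then for every n ≥ 2, x_n = (∏_{i=0}^{n-2} b_i) · ( x_1 · Σ_{S ∈ Sp(1, n-2)} g^S + x_0 · (a_0/b_0) · Σ_{S ∈ Sp(2, n-2)} g^S ). -/
/-!
Splitting a sparse subset of `{q, …, m}` according to whether it contains `m` shows that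
`T_q(m) = ∑_{S ∈ Sp(q, m)} g^S` satisfies `T_q(m) = T_q(m - 1) + g_m T_q(m - 2)`. Multiplying by
`b_0 ⋯ b_m` turns this into the recursion of `x`, since `b_0 ⋯ b_m · g_m = a_m · b_0 ⋯ b_{m-2}`;
so both sides of the formula satisfy the same two-step recursion and agree at `n = 2, 3`.
-/

open Finset

/-- A finite set of naturals is *sparse* if any two distinct elements differ by at least 2. -/
def SparseSet (S : Finset ℕ) : Prop :=
  ∀ i ∈ S, ∀ j ∈ S, i < j → 2 ≤ j - i

/-- `Sp q m` is the collection of all sparse subsets of `{q, q+1, …, m}`. -/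
def Sp (q m : ℕ) : Finset (Finset ℕ) :=
  (Finset.Icc q m).powerset.filter (fun S => ∀ i ∈ S, ∀ j ∈ S, i < j → 2 ≤ j - i)

/-- `g a b i = a i / (b (i-1) * b i)`. -/
noncomputable def g (a b : ℕ → ℂ) (i : ℕ) : ℂ := a i / (b (i - 1) * b i)

/-- `gProd a b S = ∏ i ∈ S, g a b i` (the empty product is 1). -/
noncomputable def gProd (a b : ℕ → ℂ) (S : Finset ℕ) : ℂ := ∏ i ∈ S, g a b i

theorem SparseSet.mono {S T : Finset ℕ} (hST : T ⊆ S) (hS : SparseSet S) : SparseSet T :=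
  fun i hi j hj hij => hS i (hST hi) j (hST hj) hij

theorem SparseSet.insert {S : Finset ℕ} {m : ℕ} (hS : SparseSet S) (hm : ∀ i ∈ S, i + 2 ≤ m) :
    SparseSet (insert m S) := by
  intro i hi j hj hij
  rcases mem_insert.mp hi with rfl | hiS <;> rcases mem_insert.mp hj with rfl | hjS
  · omega
  · have := hm j hjS; omega
  · have := hm i hiS; omega
  · exact hS i hiS j hjS hij

theorem mem_Sp {q m : ℕ} {S : Finset ℕ} : S ∈ Sp q m ↔ S ⊆ Icc q m ∧ SparseSet S := by
  rw [Sp, mem_filter, mem_powerset, SparseSet]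

theorem notMem_of_mem_Sp {q m k : ℕ} {S : Finset ℕ} (hS : S ∈ Sp q m) (hk : m < k) : k ∉ S :=
  fun hkS => by have := mem_Icc.mp ((mem_Sp.mp hS).1 hkS); omega

theorem Sp_eq_singleton_empty {q m : ℕ} (h : m < q) : Sp q m = {∅} := by
  ext S
  rw [mem_Sp, Icc_eq_empty_of_lt h, subset_empty, mem_singleton, and_iff_left_iff_imp]
  rintro rfl
  simp [SparseSet]

theorem sum_Sp_of_lt {M : Type*} [AddCommMonoid M] (f : Finset ℕ → M) {q m : ℕ} (h : m < q) :
    ∑ S ∈ Sp q m, f S = f ∅ := by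
  rw [Sp_eq_singleton_empty h, sum_singleton]

/-- For `q = 0` this fails at `m = 1`, where `m - 2` truncates to `0`. -/
theorem Sp_eq_union {q m : ℕ} (hq : 1 ≤ q) (hm : q ≤ m) :
    Sp q m = Sp q (m - 1) ∪ (Sp q (m - 2)).image (insert m) := by
  ext S
  simp only [mem_union, mem_image, mem_Sp]
  constructor
  · rintro ⟨hsub, hsp⟩
    by_cases hmS : m ∈ S
    · refine .inr ⟨S.erase m, ⟨fun i hi => ?_, hsp.mono (erase_subset m S)⟩, insert_erase hmS⟩
      have hiS := mem_of_mem_erase hi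
      have hgap := hsp i hiS m hmS (lt_of_le_of_ne (mem_Icc.mp (hsub hiS)).2 (ne_of_mem_erase hi))
      have := mem_Icc.mp (hsub hiS)
      exact mem_Icc.mpr (by omega)
    · refine .inl ⟨fun i hi => ?_, hsp⟩
      have := mem_Icc.mp (hsub hi)
      have : i ≠ m := ne_of_mem_of_not_mem hi hmS
      exact mem_Icc.mpr (by omega)
  · rintro (⟨hsub, hsp⟩ | ⟨S, ⟨hsub, hsp⟩, rfl⟩)
    · exact ⟨hsub.trans (Icc_subset_Icc_right (Nat.sub_le m 1)), hsp⟩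
    · have hbound : ∀ i ∈ S, q ≤ i ∧ i ≤ m - 2 := fun i hi => mem_Icc.mp (hsub hi)
      refine ⟨insert_subset (mem_Icc.mpr ⟨hm, le_rfl⟩) fun i hi => ?_,
        hsp.insert fun i hi => ?_⟩
      · have := hbound i hi; exact mem_Icc.mpr (by omega)
      · have := hbound i hi; omega

theorem sum_Sp_prod_eq {R : Type*} [CommSemiring R] (f : ℕ → R) {q m : ℕ} (hq : 1 ≤ q)
    (hm : q ≤ m) :
    ∑ S ∈ Sp q m, ∏ i ∈ S, f i =
      ∑ S ∈ Sp q (m - 1), ∏ i ∈ S, f i + f m * ∑ S ∈ Sp q (m - 2), ∏ i ∈ S, f i := by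
  have hm_notMem : ∀ S ∈ Sp q (m - 2), m ∉ S := fun S hS => notMem_of_mem_Sp hS (by omega)
  have hdisj : Disjoint (Sp q (m - 1)) ((Sp q (m - 2)).image (insert m)) := by
    refine disjoint_left.mpr fun S hS hS' => ?_
    obtain ⟨S', -, rfl⟩ := mem_image.mp hS'
    exact notMem_of_mem_Sp hS (by omega) (mem_insert_self m S')
  have hinj : Set.InjOn (insert m) (Sp q (m - 2) : Set (Finset ℕ)) := fun S hS S' hS' h => by
    simpa [erase_insert (hm_notMem S hS), erase_insert (hm_notMem S' hS')] using
      congrArg (erase · m) h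
  rw [Sp_eq_union hq hm, sum_union hdisj, sum_image hinj, mul_sum]
  exact congrArg _ (sum_congr rfl fun S hS => prod_insert (hm_notMem S hS))

theorem prod_range_mul_g (a b : ℕ → ℂ) (n : ℕ) (hn : b n ≠ 0) (hn₁ : b (n + 1) ≠ 0) :
    (∏ i ∈ range (n + 2), b i) * g a b (n + 1) = a (n + 1) * ∏ i ∈ range n, b i := by
  rw [prod_range_succ, prod_range_succ, g, Nat.add_sub_cancel]
  field_simp

theorem general_solution_add_two (a b x : ℕ → ℂ) (hb : ∀ i, b i ≠ 0)
    (hx : ∀ n, x (n + 2) = b n * x (n + 1) + a n * x n) (n : ℕ) :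
    x (n + 2) = (∏ i ∈ range (n + 1), b i) *
      (x 1 * ∑ S ∈ Sp 1 n, gProd a b S + x 0 * (a 0 / b 0) * ∑ S ∈ Sp 2 n, gProd a b S) := by
  unfold gProd
  induction n using Nat.twoStepInduction with
  | zero =>
    rw [hx 0, sum_Sp_of_lt _ zero_lt_one, sum_Sp_of_lt _ zero_lt_two, prod_range_one, prod_empty]
    field_simp [hb 0]
  | one =>
    rw [hx 1, hx 0, sum_Sp_prod_eq _ le_rfl le_rfl, sum_Sp_of_lt (m := 1 - 1) _ zero_lt_one,
      sum_Sp_of_lt (m := 1) _ one_lt_two, prod_empty, prod_range_succ, prod_range_one, g]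
    field_simp [hb 0, hb 1]
    ring
  | more k ih₀ ih₁ =>
    rw [hx (k + 2), ih₀, ih₁, sum_Sp_prod_eq _ (m := k + 2) (le_refl 1) (by omega),
      sum_Sp_prod_eq _ (m := k + 2) one_le_two (by omega),
      show k + 2 - 1 = k + 1 by omega, Nat.add_sub_cancel]
    set u₀ := ∑ S ∈ Sp 1 k, ∏ i ∈ S, g a b i
    set v₀ := ∑ S ∈ Sp 2 k, ∏ i ∈ S, g a b i
    set u₁ := ∑ S ∈ Sp 1 (k + 1), ∏ i ∈ S, g a b i
    set v₁ := ∑ S ∈ Sp 2 (k + 1), ∏ i ∈ S, g a b i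
    linear_combination
      -(x 1 * u₁ + x 0 * (a 0 / b 0) * v₁) * prod_range_succ b (k + 2) -
      (x 1 * u₀ + x 0 * (a 0 / b 0) * v₀) * prod_range_mul_g a b (k + 1) (hb (k + 1)) (hb (k + 2))

/-- The general solution of the second-order linear difference equation
`x (n+2) = b n * x (n+1) + a n * x n` in terms of sums over sparse subsets. -/
theorem general_solution_degree_two (a b x : ℕ → ℂ)
    (hb : ∀ i, b i ≠ 0)
    (hx : ∀ n, x (n + 2) = b n * x (n + 1) + a n * x n) :
    ∀ n, 2 ≤ n →
      x n = (∏ i ∈ Finset.range (n - 1), b i) *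
        (x 1 * ∑ S ∈ Sp 1 (n - 2), gProd a b S +
         x 0 * (a 0 / b 0) * ∑ S ∈ Sp 2 (n - 2), gProd a b S) := by
  intro n hn
  obtain ⟨m, rfl⟩ := Nat.exists_eq_add_of_le' hn
  exact general_solution_add_two a b x hb hx m
end

section
/- Let c ∈ ℂ not be a nonpositive integer and let z ∈ ℂ. Define x : ℕ → ℂ by x_n = (-z)^n/(c)_n · ₀F₁(c+n; z). Then x satisfies the difference equation x_{n+2} = (c+n)·x_{n+1} + z·x_n for all n ∈ ℕ. -/
/-!
Up to the factor `z (-z)ⁿ / (c)ₙ₊₂`, the difference equation is the contiguous relation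
`a (a + 1) (₀F₁(a; z) - ₀F₁(a + 1; z)) = z ₀F₁(a + 2; z)` at `a = c + n`. That relation holds term
by term: the constant terms cancel, and the `(k+1)`-st term of the left side is the `k`-th term
of the right side, because `(a)ₖ₊₁ = a (a + 1)ₖ` and `(a + 1)ₖ (a + 1 + k) = (a + 1) (a + 2)ₖ`.
-/

open Finset

/-- Pochhammer symbol `(c)_k = c (c+1) ⋯ (c+k-1)`, with `(c)_0 = 1`. -/
noncomputable def poch (c : ℂ) (k : ℕ) : ℂ := ∏ j ∈ Finset.range k, (c + j)

/-- The hypergeometric function `₀F₁(c; z) = ∑_{k=0}^∞ z^k / ((c)_k k!)`. -/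
noncomputable def F01 (c z : ℂ) : ℂ := ∑' k : ℕ, z ^ k / (poch c k * (Nat.factorial k))

open Filter Topology

@[simp] lemma poch_zero (c : ℂ) : poch c 0 = 1 := prod_range_zero _

lemma poch_succ (c : ℂ) (k : ℕ) : poch c (k + 1) = poch c k * (c + k) := prod_range_succ _ _

lemma poch_succ_eq_mul_poch_add_one (c : ℂ) (k : ℕ) : poch c (k + 1) = c * poch (c + 1) k := by
  rw [poch, prod_range_succ', poch, mul_comm]
  push_cast
  simp only [add_zero, add_assoc, add_comm (1 : ℂ)]

lemma add_natCast_ne_zero {c : ℂ} (hc : ∀ n : ℕ, c ≠ -n) (n : ℕ) : c + n ≠ 0 :=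
  fun h => hc n (eq_neg_of_add_eq_zero_left h)

lemma add_natCast_ne_neg_natCast {c : ℂ} (hc : ∀ n : ℕ, c ≠ -n) (m : ℕ) :
    ∀ n : ℕ, c + m ≠ -n := fun n h => hc (m + n) (by push_cast; linear_combination h)

lemma poch_ne_zero {c : ℂ} (hc : ∀ n : ℕ, c ≠ -n) (k : ℕ) : poch c k ≠ 0 :=
  prod_ne_zero_iff.mpr fun j _ => add_natCast_ne_zero hc j

lemma tendsto_norm_add_natCast_atTop (c : ℂ) :
    Tendsto (fun k : ℕ => ‖c + k‖) atTop atTop := by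
  refine tendsto_atTop_mono (fun k => ?_)
    (tendsto_atTop_add_const_right _ (-‖c‖) tendsto_natCast_atTop_atTop)
  calc (k : ℝ) + -‖c‖ = ‖(k : ℂ)‖ - ‖c‖ := by rw [Complex.norm_natCast, sub_eq_add_neg]
    _ ≤ ‖c + k‖ := by simpa [add_comm] using norm_sub_norm_le (k : ℂ) (-c)

noncomputable def F01Term (c z : ℂ) (k : ℕ) : ℂ := z ^ k / (poch c k * k.factorial)

lemma F01_eq_tsum (c z : ℂ) : F01 c z = ∑' k, F01Term c z k := rfl

lemma F01Term_zero (c z : ℂ) : F01Term c z 0 = 1 := by simp [F01Term]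

lemma F01Term_succ (c z : ℂ) (k : ℕ) :
    F01Term c z (k + 1) = F01Term c z k * (z / ((c + k) * (k + 1 : ℕ))) := by
  simp only [F01Term, poch_succ, Nat.factorial_succ, Nat.cast_mul, pow_succ, div_eq_mul_inv,
    mul_inv]
  ring

lemma tendsto_F01Term_ratio (c z : ℂ) :
    Tendsto (fun k : ℕ => ‖z / ((c + k) * (k + 1 : ℕ))‖) atTop (𝓝 0) := by
  simp only [norm_div, norm_mul, Complex.norm_natCast]
  exact tendsto_const_nhds.div_atTop <| (tendsto_norm_add_natCast_atTop c).atTop_mul_atTop₀ <|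
    tendsto_natCast_atTop_atTop.comp (tendsto_add_atTop_nat 1)

lemma summable_F01Term (c z : ℂ) : Summable (F01Term c z) := by
  refine summable_of_ratio_norm_eventually_le one_half_lt_one ?_
  filter_upwards [(tendsto_F01Term_ratio c z).eventually_le_const one_half_pos] with k hk
  rw [F01Term_succ, norm_mul, mul_comm]
  exact mul_le_mul_of_nonneg_right hk (norm_nonneg _)

lemma mul_F01Term_sub_F01Term_add_one {c : ℂ} (hc : ∀ n : ℕ, c ≠ -n) (z : ℂ) (k : ℕ) :
    c * (c + 1) * (F01Term c z (k + 1) - F01Term (c + 1) z (k + 1)) =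
      z * F01Term (c + 2) z k := by
  have hc0 : c ≠ 0 := by simpa using add_natCast_ne_zero hc 0
  have hfac : (k.factorial : ℂ) ≠ 0 := by exact_mod_cast k.factorial_ne_zero
  have hck : c + 1 + k ≠ 0 := by simpa [add_assoc] using add_natCast_ne_zero hc (1 + k)
  have hpoch₁ : poch (c + 1) k ≠ 0 :=
    poch_ne_zero (by exact_mod_cast add_natCast_ne_neg_natCast hc 1) k
  have hpoch₂ : poch (c + 2) k ≠ 0 :=
    poch_ne_zero (by exact_mod_cast add_natCast_ne_neg_natCast hc 2) k
  have hpoch : poch (c + 1) k * (c + 1 + k) = (c + 1) * poch (c + 2) k := by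
    rw [← poch_succ, poch_succ_eq_mul_poch_add_one]
    ring_nf
  simp only [F01Term, poch_succ_eq_mul_poch_add_one c, poch_succ (c + 1), Nat.factorial_succ,
    pow_succ]
  push_cast
  field_simp
  linear_combination (-(z ^ k * z * ((k : ℂ) + 1))) * hpoch

lemma F01_contiguous {c : ℂ} (hc : ∀ n : ℕ, c ≠ -n) (z : ℂ) :
    c * (c + 1) * (F01 c z - F01 (c + 1) z) = z * F01 (c + 2) z := by
  have hsum := (summable_F01Term c z).sub (summable_F01Term (c + 1) z)
  rw [F01_eq_tsum, F01_eq_tsum, F01_eq_tsum, ← (summable_F01Term c z).tsum_sub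
    (summable_F01Term (c + 1) z), hsum.tsum_eq_zero_add, F01Term_zero, F01Term_zero, sub_self,
    zero_add, ← tsum_mul_left, ← tsum_mul_left]
  exact tsum_congr (mul_F01Term_sub_F01Term_add_one hc z)

/-- The sequence `x n = (-z)^n / (c)_n * ₀F₁(c+n; z)` satisfies the difference
equation `x (n+2) = (c+n) x (n+1) + z x n`. -/
theorem F01_difference_equation (c z : ℂ) (hc : ∀ n : ℕ, c ≠ -(n : ℂ)) :
    ∀ n : ℕ,
      (fun n : ℕ => (-z) ^ n / poch c n * F01 (c + n) z) (n + 2) =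
        (c + n) * (fun n : ℕ => (-z) ^ n / poch c n * F01 (c + n) z) (n + 1) +
          z * (fun n : ℕ => (-z) ^ n / poch c n * F01 (c + n) z) n := by
  intro n
  have hpoch := poch_ne_zero hc n
  have hcn := add_natCast_ne_zero hc n
  have hcn1 : c + n + 1 ≠ 0 := by simpa [add_assoc] using add_natCast_ne_zero hc (n + 1)
  have hcontig := F01_contiguous (add_natCast_ne_neg_natCast hc n) z
  simp only [poch_succ, Nat.cast_add, Nat.cast_one, Nat.cast_ofNat, ← add_assoc]
  field_simp
  linear_combination (-(z * (-z) ^ n)) * hcontig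
end

section
/- Let q, z ∈ ℂ with |q| < 1. For n ∈ ℕ define H_n = Σ_{k=0}^∞ q^{k² + nk}·z^k/(q)_k (this series converges absolutely). Then for every n ∈ ℕ, H_n = H_{n+1} + z·q^{n+1}·H_{n+2}. -/
open Finset

/-- q-Pochhammer symbol `(q)_k = ∏_{j=1}^k (1 - q^j)`, with `(q)_0 = 1`. -/
noncomputable def qPoch (q : ℂ) (k : ℕ) : ℂ := ∏ j ∈ Finset.range k, (1 - q ^ (j + 1))

/-- `H n = ∑_{k=0}^∞ q^{k² + nk} z^k / (q)_k`. -/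
noncomputable def Hfun (q z : ℂ) (n : ℕ) : ℂ :=
  ∑' k : ℕ, q ^ (k ^ 2 + n * k) * z ^ k / qPoch q k

/-!
Write `t_n(k)` for the `k`-th term of `H n`. Since `(q)_{k+1} = (q)_k (1 - q^{k+1})`,
consecutive terms have ratio `q^{2k+n+1} z / (1 - q^{k+1}) → 0`, so every `H n` converges
by the ratio test. Termwise, `t_n(k+1) - t_{n+1}(k+1) = z q^{n+1} t_{n+2}(k)`: the factor
`1 - q^{k+1}` produced by the difference cancels the last factor of `(q)_{k+1}`. As
`t_n(0) = t_{n+1}(0) = 1`, summing over `k` gives `H n - H (n+1) = z q^{n+1} H (n+2)`.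
-/

open Filter Topology

lemma one_sub_pow_ne_zero_of_norm_lt_one {R : Type*} [NormedRing R] [NormOneClass R] {q : R}
    (hq : ‖q‖ < 1) {m : ℕ} (hm : m ≠ 0) : 1 - q ^ m ≠ 0 := by
  refine sub_ne_zero.2 fun h => ?_
  have : ‖q ^ m‖ < 1 :=
    (norm_pow_le' q (Nat.pos_of_ne_zero hm)).trans_lt (pow_lt_one₀ (norm_nonneg q) hq hm)
  simp [← h] at this

lemma summable_of_eq_mul_of_tendsto_zero {R : Type*} [NormedRing R] [CompleteSpace R]
    {f ρ : ℕ → R} (hf : ∀ k, f (k + 1) = f k * ρ k) (hρ : Tendsto ρ atTop (𝓝 0)) :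
    Summable f := by
  refine summable_of_ratio_norm_eventually_le (r := 1 / 2) (by norm_num) ?_
  have hsmall := (tendsto_zero_iff_norm_tendsto_zero.1 hρ).eventually
    (eventually_le_nhds (by norm_num : (0 : ℝ) < 1 / 2))
  filter_upwards [hsmall] with k hk
  calc ‖f (k + 1)‖ = ‖f k * ρ k‖ := by rw [hf]
    _ ≤ ‖f k‖ * ‖ρ k‖ := norm_mul_le _ _
    _ ≤ ‖f k‖ * (1 / 2) := by gcongr
    _ = 1 / 2 * ‖f k‖ := mul_comm _ _

lemma qPoch_succ (q : ℂ) (k : ℕ) : qPoch q (k + 1) = qPoch q k * (1 - q ^ (k + 1)) :=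
  prod_range_succ _ _

noncomputable def HfunTerm (q z : ℂ) (n k : ℕ) : ℂ :=
  q ^ (k ^ 2 + n * k) * z ^ k / qPoch q k

lemma HfunTerm_zero (q z : ℂ) (n : ℕ) : HfunTerm q z n 0 = 1 := by
  simp [HfunTerm, qPoch]

lemma HfunTerm_succ (q z : ℂ) (n k : ℕ) :
    HfunTerm q z n (k + 1) =
      HfunTerm q z n k * (q ^ (n + 1) * z * (q ^ 2) ^ k / (1 - q * q ^ k)) := by
  rw [HfunTerm, HfunTerm, qPoch_succ, div_mul_div_comm]
  congr 1 <;> ring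

lemma summable_HfunTerm {q : ℂ} (z : ℂ) (hq : ‖q‖ < 1) (n : ℕ) :
    Summable (HfunTerm q z n) := by
  refine summable_of_eq_mul_of_tendsto_zero (HfunTerm_succ q z n) ?_
  have hq2 : ‖q ^ 2‖ < 1 := by simpa using pow_lt_one₀ (norm_nonneg q) hq two_ne_zero
  have hlim : Tendsto (fun k : ℕ => q ^ (n + 1) * z * (q ^ 2) ^ k / (1 - q * q ^ k)) atTop
      (𝓝 (q ^ (n + 1) * z * 0 / (1 - q * 0))) :=
    (tendsto_const_nhds.mul (tendsto_pow_atTop_nhds_zero_of_norm_lt_one hq2)).div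
      (tendsto_const_nhds.sub
        (tendsto_const_nhds.mul (tendsto_pow_atTop_nhds_zero_of_norm_lt_one hq)))
      (by simp)
  simpa using hlim

lemma HfunTerm_succ_sub_HfunTerm_succ (q z : ℂ) (n k : ℕ) (hk : 1 - q ^ (k + 1) ≠ 0) :
    HfunTerm q z n (k + 1) - HfunTerm q z (n + 1) (k + 1) =
      z * q ^ (n + 1) * HfunTerm q z (n + 2) k := by
  simp only [HfunTerm, qPoch_succ]
  field_simp
  ring

/-- The Rogers–Ramanujan functional equation `H n = H (n+1) + z q^{n+1} H (n+2)`. -/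
theorem Hfun_rec (q z : ℂ) (hq : ‖q‖ < 1) :
    ∀ n : ℕ, Hfun q z n = Hfun q z (n + 1) + z * q ^ (n + 1) * Hfun q z (n + 2) := by
  intro n
  have hs := summable_HfunTerm z hq
  have hdiff : Hfun q z n - Hfun q z (n + 1) =
      ∑' k, (HfunTerm q z n k - HfunTerm q z (n + 1) k) :=
    ((hs n).tsum_sub (hs (n + 1))).symm
  rw [((hs n).sub (hs (n + 1))).tsum_eq_zero_add, HfunTerm_zero, HfunTerm_zero, sub_self,
    zero_add, tsum_congr fun k => HfunTerm_succ_sub_HfunTerm_succ q z n k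
      (one_sub_pow_ne_zero_of_norm_lt_one hq k.succ_ne_zero), tsum_mul_left] at hdiff
  exact eq_add_of_sub_eq' hdiff
end

section
/- Let q ∈ ℝ with q > 1, c ∈ ℝ, and z ∈ ℂ. Define a, b : ℕ → ℂ by a_m = z for all m and b_m = q^{e_m} where e_m = (-1)^m·(c + Σ_{k=0}^{m} (-1)^k·k), and let A, B be the canonical numerators and denominators of the continued fraction K(a_m/b_m). Suppose Σ_{k=0}^∞ (-1)^k·z^k·q^{-k(k-1)/2}/(q)_k ≠ 0. Then the approximants A_n/B_n converge, as n → ∞, to z·q^{-c} · (Σ_{k=0}^∞ (-1)^k·z^k·q^{-k(k+1)/2}/(q)_k)/(Σ_{k=0}^∞ (-1)^k·z^k·q^{-k(k-1)/2}/(q)_k) (a form of the Rogers–Ramanujan continued fraction for |q| > 1; both series converge absolutely). -/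
open Finset Filter Topology

/-- The exponent `e_m = (-1)^m (c + ∑_{k=0}^m (-1)^k k)`. -/
noncomputable def expo (c : ℝ) (m : ℕ) : ℝ :=
  (-1 : ℝ) ^ m * (c + ∑ k ∈ Finset.range (m + 1), (-1 : ℝ) ^ k * k)

/-- Canonical numerators of the continued fraction `K (a n / b n)`. -/
noncomputable def contA (a b : ℕ → ℂ) : ℕ → ℂ
  | 0 => 0
  | 1 => a 0
  | (n + 2) => b (n + 1) * contA a b (n + 1) + a (n + 1) * contA a b n

/-- Canonical denominators of the continued fraction `K (a n / b n)`. -/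
noncomputable def contB (a b : ℕ → ℂ) : ℕ → ℂ
  | 0 => 1
  | 1 => b 0
  | (n + 2) => b (n + 1) * contB a b (n + 1) + a (n + 1) * contB a b n

/-!
Put `x = q⁻¹`, so `‖x‖ < 1`, and `G n = ∑ₖ zᵏ x^(k² + n k) / (x)ₖ` (this is `series x z n`).
Inverting the base of the q-Pochhammer symbol, `(q)ₖ = (-1)ᵏ q^(k(k+1)/2) (x)ₖ`, turns the two
series of the statement into `G 1` and `G 0`. These series satisfy
`G n = G (n+1) + z x^(n+1) G (n+2)` and `G n → 1`.
Dividing `A n` and `B n` by `b 0 ⋯ b (n-1)` gives solutions of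
`u (n+2) = u (n+1) + z x^(n+1) u n`, because `b n b (n+1) = q^(n+1)`. Such solutions are bounded,
and `u (n+1) G (n+1) + z x^(n+1) u n G (n+2)` does not depend on `n`, so `u (n+1)` converges to
`u 1 G 1 + z x u 0 G 2`: this is `z q^(-c) G 1` for the numerators and `G 0` for the denominators.
-/

namespace RogersRamanujan

lemma qPoch_succ (w : ℂ) (k : ℕ) : qPoch w (k + 1) = qPoch w k * (1 - w ^ (k + 1)) :=
  prod_range_succ _ _

lemma one_sub_norm_pow_le_norm_qPoch {w : ℂ} (hw : ‖w‖ ≤ 1) (k : ℕ) :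
    (1 - ‖w‖) ^ k ≤ ‖qPoch w k‖ := by
  induction k with
  | zero => simp [qPoch]
  | succ k ih =>
    have hfactor : 1 - ‖w‖ ≤ ‖1 - w ^ (k + 1)‖ := calc
      1 - ‖w‖ ≤ 1 - ‖w‖ ^ (k + 1) := by
        gcongr; exact pow_le_of_le_one (norm_nonneg w) hw (by omega)
      _ = ‖(1 : ℂ)‖ - ‖w ^ (k + 1)‖ := by rw [norm_one, norm_pow]
      _ ≤ ‖1 - w ^ (k + 1)‖ := norm_sub_norm_le _ _
    rw [qPoch_succ, norm_mul, pow_succ]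
    exact mul_le_mul ih hfactor (sub_nonneg.2 hw) (norm_nonneg _)

lemma qPoch_ne_zero {w : ℂ} (hw : ‖w‖ < 1) (k : ℕ) : qPoch w k ≠ 0 :=
  norm_pos_iff.1 <| (pow_pos (sub_pos.2 hw) k).trans_le (one_sub_norm_pow_le_norm_qPoch hw.le k)

lemma qPoch_eq_mul_qPoch_inv {w : ℂ} (hw : w ≠ 0) (k : ℕ) :
    qPoch w k = (-1) ^ k * w ^ (k + 1).choose 2 * qPoch w⁻¹ k := by
  induction k with
  | zero => simp [qPoch]
  | succ k ih =>
    rw [qPoch_succ, qPoch_succ, ih, Nat.choose_succ_succ' (k + 1), Nat.choose_one_right, pow_add,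
      inv_pow]
    field_simp
    ring

lemma summable_pow_mul_pow_sq (C : ℝ) {r : ℝ} (hr0 : 0 ≤ r) (hr : r < 1) :
    Summable fun k : ℕ => C ^ k * r ^ (k ^ 2) := by
  have hsmall : ∀ᶠ k : ℕ in atTop, |C| * r ^ k ≤ 1 / 2 := by
    have h := (tendsto_pow_atTop_nhds_zero_of_lt_one hr0 hr).const_mul |C|
    rw [mul_zero] at h
    exact h.eventually_le_const (by norm_num)
  refine .of_norm_bounded_eventually_nat summable_geometric_two ?_
  filter_upwards [hsmall] with k hk
  calc ‖C ^ k * r ^ (k ^ 2)‖ = (|C| * r ^ k) ^ k := by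
        rw [Real.norm_eq_abs, abs_mul, abs_pow, abs_pow, abs_of_nonneg hr0, mul_pow, ← pow_mul, sq]
    _ ≤ (1 / 2) ^ k := pow_le_pow_left₀ (by positivity) hk k

noncomputable def term (x z : ℂ) (n k : ℕ) : ℂ := z ^ k * x ^ (k ^ 2 + n * k) / qPoch x k

noncomputable def series (x z : ℂ) (n : ℕ) : ℂ := ∑' k, term x z n k

variable {x z : ℂ}

lemma norm_term_le (hx : ‖x‖ < 1) (n k : ℕ) :
    ‖term x z n k‖ ≤ (‖z‖ / (1 - ‖x‖)) ^ k * ‖x‖ ^ (k ^ 2) := by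
  rw [term, norm_div, norm_mul, norm_pow, norm_pow, div_pow, div_mul_eq_mul_div]
  refine div_le_div₀ (by positivity) ?_ (pow_pos (sub_pos.2 hx) k)
    (one_sub_norm_pow_le_norm_qPoch hx.le k)
  exact mul_le_mul_of_nonneg_left
    (pow_le_pow_of_le_one (norm_nonneg x) hx.le (Nat.le_add_right _ _)) (by positivity)

lemma summable_term (hx : ‖x‖ < 1) (n : ℕ) : Summable (term x z n) :=
  .of_norm_bounded (summable_pow_mul_pow_sq _ (norm_nonneg x) hx) (norm_term_le hx n)

lemma term_succ_sub_term_succ (hx : ‖x‖ < 1) (n k : ℕ) :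
    term x z n (k + 1) - term x z (n + 1) (k + 1) = z * x ^ (n + 1) * term x z (n + 2) k := by
  have hq := qPoch_ne_zero hx k
  have hk : 1 - x ^ (k + 1) ≠ 0 := (mul_ne_zero_iff.1 (qPoch_succ x k ▸ qPoch_ne_zero hx (k + 1))).2
  simp only [term, qPoch_succ]
  field_simp
  ring

lemma series_eq_add (hx : ‖x‖ < 1) (n : ℕ) :
    series x z n = series x z (n + 1) + z * x ^ (n + 1) * series x z (n + 2) := by
  have hs := summable_term hx (z := z)
  have hdiff : series x z n - series x z (n + 1) = z * x ^ (n + 1) * series x z (n + 2) := by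
    rw [series, series, ← (hs n).tsum_sub (hs (n + 1)), ((hs n).sub (hs (n + 1))).tsum_eq_zero_add]
    simp only [term_succ_sub_term_succ hx, tsum_mul_left]
    simp [term, qPoch, series]
  linear_combination hdiff

lemma tendsto_series (hx : ‖x‖ < 1) : Tendsto (series x z) atTop (𝓝 1) := by
  have hlim : ∀ k, Tendsto (fun n => term x z n k) atTop (𝓝 (if k = 0 then 1 else 0)) := by
    rintro (_ | k)
    · simp [term, qPoch]
    · have hpow : Tendsto (fun n : ℕ => x ^ ((k + 1) ^ 2 + n * (k + 1))) atTop (𝓝 0) := by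
        have h := (tendsto_pow_atTop_nhds_zero_of_norm_lt_one (x := x ^ (k + 1))
          (by simpa using pow_lt_one₀ (norm_nonneg x) hx k.succ_ne_zero)).const_mul
          (x ^ ((k + 1) ^ 2))
        rw [mul_zero] at h
        exact h.congr fun n => by ring
      simpa [term] using (hpow.const_mul (z ^ (k + 1))).div_const (qPoch x (k + 1))
  unfold series
  simpa using tendsto_tsum_of_dominated_convergence (summable_pow_mul_pow_sq _ (norm_nonneg x) hx)
    hlim (.of_forall fun n k => norm_term_le hx n k)

lemma le_mul_exp_tsum_of_le_one_add_mul {m ε : ℕ → ℝ} (hm0 : 0 ≤ m 0) (hε : ∀ n, 0 ≤ ε n)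
    (hε_sum : Summable ε) (hm : ∀ n, m (n + 1) ≤ (1 + ε n) * m n) (n : ℕ) :
    m n ≤ m 0 * Real.exp (∑' k, ε k) := by
  have hpartial : ∀ n, m n ≤ m 0 * Real.exp (∑ k ∈ range n, ε k) := by
    intro n
    induction n with
    | zero => simp
    | succ n ih =>
      calc m (n + 1) ≤ (1 + ε n) * m n := hm n
        _ ≤ (1 + ε n) * (m 0 * Real.exp (∑ k ∈ range n, ε k)) := by
          gcongr; linarith [hε n]
        _ ≤ Real.exp (ε n) * (m 0 * Real.exp (∑ k ∈ range n, ε k)) := by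
          gcongr; linarith [Real.add_one_le_exp (ε n)]
        _ = m 0 * Real.exp (∑ k ∈ range (n + 1), ε k) := by
          rw [sum_range_succ, Real.exp_add]; ring
  exact (hpartial n).trans (by gcongr; exact hε_sum.sum_le_tsum _ fun k _ => hε k)

lemma isBoundedUnder_norm_of_recurrence (hx : ‖x‖ < 1) {u : ℕ → ℂ}
    (hu : ∀ n, u (n + 2) = u (n + 1) + z * x ^ (n + 1) * u n) :
    IsBoundedUnder (· ≤ ·) atTop (norm ∘ u) := by
  set m : ℕ → ℝ := fun n => max ‖u n‖ ‖u (n + 1)‖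
  set ε : ℕ → ℝ := fun n => ‖z‖ * ‖x‖ ^ (n + 1)
  have hε : ∀ n, 0 ≤ ε n := fun n => by positivity
  have hε_sum : Summable ε := by
    refine ((summable_geometric_of_lt_one (norm_nonneg x) hx).mul_left (‖z‖ * ‖x‖)).congr
      fun n => ?_
    simp only [ε]; ring
  have hm : ∀ n, m (n + 1) ≤ (1 + ε n) * m n := by
    intro n
    have h0 : ‖u n‖ ≤ m n := le_max_left _ _
    have h1 : ‖u (n + 1)‖ ≤ m n := le_max_right _ _
    have h2 : ‖u (n + 2)‖ ≤ ‖u (n + 1)‖ + ε n * ‖u n‖ := by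
      rw [hu n]
      refine (norm_add_le _ _).trans_eq ?_
      simp only [ε, norm_mul, norm_pow]
    have hεm : 0 ≤ ε n * m n := mul_nonneg (hε n) ((norm_nonneg _).trans h0)
    refine max_le ?_ ?_
    · linarith
    · nlinarith [hε n]
  refine isBoundedUnder_of ⟨m 0 * Real.exp (∑' k, ε k), fun n => ?_⟩
  exact (le_max_left _ _).trans
    (le_mul_exp_tsum_of_le_one_add_mul (by positivity) hε hε_sum hm n)

lemma casoratian_eq (hx : ‖x‖ < 1) {u : ℕ → ℂ}
    (hu : ∀ n, u (n + 2) = u (n + 1) + z * x ^ (n + 1) * u n) (n : ℕ) :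
    u (n + 1) * series x z (n + 1) + z * x ^ (n + 1) * u n * series x z (n + 2) =
      u 1 * series x z 1 + z * x * u 0 * series x z 2 := by
  induction n with
  | zero => simp
  | succ n ih =>
    rw [← ih, hu n]
    linear_combination (-u (n + 1)) * series_eq_add hx (z := z) (n + 1)

theorem tendsto_of_recurrence (hx : ‖x‖ < 1) {u : ℕ → ℂ}
    (hu : ∀ n, u (n + 2) = u (n + 1) + z * x ^ (n + 1) * u n) :
    Tendsto (fun n => u (n + 1)) atTop
      (𝓝 (u 1 * series x z 1 + z * x * u 0 * series x z 2)) := by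
  have hbdd := isBoundedUnder_norm_of_recurrence hx hu
  have hv := tendsto_series hx (z := z)
  have herr₁ : Tendsto (fun n => (1 - series x z (n + 1)) * u (n + 1)) atTop (𝓝 0) := by
    refine .zero_mul_isBoundedUnder_le ?_ ((tendsto_add_atTop_nat 1).isBoundedUnder_comp hbdd)
    simpa using tendsto_const_nhds.sub (hv.comp (tendsto_add_atTop_nat 1)) (a := (1 : ℂ))
  have herr₂ : Tendsto (fun n => z * x ^ (n + 1) * series x z (n + 2) * u n) atTop (𝓝 0) := by
    refine .zero_mul_isBoundedUnder_le ?_ hbdd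
    simpa using (((tendsto_pow_atTop_nhds_zero_of_norm_lt_one hx).comp
      (tendsto_add_atTop_nat 1)).const_mul z).mul (hv.comp (tendsto_add_atTop_nat 2))
  have h := (herr₁.sub herr₂).const_add (u 1 * series x z 1 + z * x * u 0 * series x z 2)
  rw [sub_zero, add_zero] at h
  refine h.congr fun n => ?_
  linear_combination (-1 : ℂ) * casoratian_eq hx hu n

lemma prod_inv_mul_of_recurrence {K : Type*} [Field K] {a b s : ℕ → K} (hb : ∀ n, b n ≠ 0)
    (hs : ∀ n, s (n + 2) = b (n + 1) * s (n + 1) + a (n + 1) * s n) (n : ℕ) :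
    (∏ k ∈ range (n + 2), (b k)⁻¹) * s (n + 2) =
      (∏ k ∈ range (n + 1), (b k)⁻¹) * s (n + 1) +
        a (n + 1) * (b n * b (n + 1))⁻¹ * ((∏ k ∈ range n, (b k)⁻¹) * s n) := by
  have hn := hb n
  have hn1 := hb (n + 1)
  rw [hs n, prod_range_succ, prod_range_succ]
  field_simp

theorem tendsto_contA_div_contB (hx : ‖x‖ < 1) (h0 : series x z 0 ≠ 0) {a b : ℕ → ℂ}
    (ha : ∀ n, a n = z) (hb : ∀ n, b n ≠ 0) (hbb : ∀ n, (b n * b (n + 1))⁻¹ = x ^ (n + 1)) :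
    Tendsto (fun n => contA a b (n + 1) / contB a b (n + 1)) atTop
      (𝓝 (z * (b 0)⁻¹ * series x z 1 / series x z 0)) := by
  set ρ : ℕ → ℂ := fun n => ∏ k ∈ range n, (b k)⁻¹
  have hrec : ∀ s : ℕ → ℂ, (∀ n, s (n + 2) = b (n + 1) * s (n + 1) + a (n + 1) * s n) →
      ∀ n, ρ (n + 2) * s (n + 2) = ρ (n + 1) * s (n + 1) + z * x ^ (n + 1) * (ρ n * s n) := by
    intro s hs n
    rw [prod_inv_mul_of_recurrence hb hs, ha, hbb]
  have hA := tendsto_of_recurrence (u := fun n => ρ n * contA a b n) hx (hrec _ fun _ => rfl)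
  have hB := tendsto_of_recurrence (u := fun n => ρ n * contB a b n) hx (hrec _ fun _ => rfl)
  have hA_lim : ρ 1 * contA a b 1 * series x z 1 + z * x * (ρ 0 * contA a b 0) * series x z 2 =
      z * (b 0)⁻¹ * series x z 1 := by
    simp only [ρ, contA, ha, prod_range_one, mul_zero, zero_mul, add_zero]; ring
  have hB_lim : ρ 1 * contB a b 1 * series x z 1 + z * x * (ρ 0 * contB a b 0) * series x z 2 =
      series x z 0 := by
    simp only [ρ, contB, prod_range_one, prod_range_zero, inv_mul_cancel₀ (hb 0), one_mul, mul_one]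
    linear_combination (series_eq_add hx 0).symm
  rw [hA_lim] at hA
  rw [hB_lim] at hB
  refine (hA.div hB h0).congr fun n => mul_div_mul_left _ _ ?_
  exact prod_ne_zero_iff.2 fun k _ => inv_ne_zero (hb k)

lemma neg_one_pow_mul_rpow_div_qPoch {q : ℝ} (hq : 0 < q) (z : ℂ) (n k : ℕ) {r : ℝ}
    (hr : r = (k + 1).choose 2 - (k ^ 2 + n * k : ℕ)) :
    (-1) ^ k * z ^ k * ((q ^ r : ℝ) : ℂ) / qPoch q k = term (q : ℂ)⁻¹ z n k := by
  have hq' : (q : ℂ) ≠ 0 := by exact_mod_cast hq.ne'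
  have hc : (-1) ^ k * (q : ℂ) ^ (k + 1).choose 2 ≠ 0 := by simp [hq']
  rw [hr, Real.rpow_sub hq, Real.rpow_natCast, Real.rpow_natCast, qPoch_eq_mul_qPoch_inv hq', term,
    ← mul_div_mul_left (z ^ k * _) _ hc]
  push_cast
  ring

lemma expo_zero (c : ℝ) : expo c 0 = c := by simp [expo]

lemma expo_add_expo_succ (c : ℝ) (n : ℕ) : expo c n + expo c (n + 1) = n + 1 := by
  rw [expo, expo, sum_range_succ _ (n + 1)]
  rcases Nat.even_or_odd n with h | h <;>
    · rw [h.neg_one_pow, h.add_one.neg_one_pow]; push_cast; ring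

end RogersRamanujan

open RogersRamanujan in
/-- A form of the Rogers–Ramanujan continued fraction for `|q| > 1`:
the approximants of `K(z / q^{e_m})` converge to
`z q^{-c} (∑ (-1)^k z^k q^{-k(k+1)/2}/(q)_k)/(∑ (-1)^k z^k q^{-k(k-1)/2}/(q)_k)`. -/
theorem rogers_ramanujan_q_gt_one (q : ℝ) (hq : 1 < q) (c : ℝ) (z : ℂ)
    (hne : (∑' k : ℕ, (-1 : ℂ) ^ k * z ^ k *
        ((q ^ (-((k * (k - 1) : ℝ)) / 2) : ℝ) : ℂ) / qPoch (q : ℂ) k) ≠ 0)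
    (a b : ℕ → ℂ) (ha : ∀ m : ℕ, a m = z)
    (hb : ∀ m : ℕ, b m = ((q ^ expo c m : ℝ) : ℂ)) :
    Tendsto (fun n => contA a b (n + 1) / contB a b (n + 1)) atTop
      (𝓝 (z * ((q ^ (-c) : ℝ) : ℂ) *
        (∑' k : ℕ, (-1 : ℂ) ^ k * z ^ k *
          ((q ^ (-((k * (k + 1) : ℝ)) / 2) : ℝ) : ℂ) / qPoch (q : ℂ) k) /
        (∑' k : ℕ, (-1 : ℂ) ^ k * z ^ k *
          ((q ^ (-((k * (k - 1) : ℝ)) / 2) : ℝ) : ℂ) / qPoch (q : ℂ) k))) := by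
  have hq0 : 0 < q := one_pos.trans hq
  have hx : ‖(q : ℂ)⁻¹‖ < 1 := by
    rw [norm_inv, Complex.norm_of_nonneg hq0.le]
    exact inv_lt_one_of_one_lt₀ hq
  have hD : (∑' k : ℕ, (-1 : ℂ) ^ k * z ^ k *
      ((q ^ (-((k * (k - 1) : ℝ)) / 2) : ℝ) : ℂ) / qPoch (q : ℂ) k) = series (q : ℂ)⁻¹ z 0 :=
    tsum_congr fun k => neg_one_pow_mul_rpow_div_qPoch hq0 z 0 k
      (by push_cast [Nat.cast_choose_two]; ring)
  have hN : (∑' k : ℕ, (-1 : ℂ) ^ k * z ^ k *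
      ((q ^ (-((k * (k + 1) : ℝ)) / 2) : ℝ) : ℂ) / qPoch (q : ℂ) k) = series (q : ℂ)⁻¹ z 1 :=
    tsum_congr fun k => neg_one_pow_mul_rpow_div_qPoch hq0 z 1 k
      (by push_cast [Nat.cast_choose_two]; ring)
  have hb_ne : ∀ n, b n ≠ 0 := fun n => by
    rw [hb]; exact_mod_cast (Real.rpow_pos_of_pos hq0 _).ne'
  have hbb : ∀ n : ℕ, (b n * b (n + 1))⁻¹ = (q : ℂ)⁻¹ ^ (n + 1) := fun n => by
    rw [hb, hb, ← Complex.ofReal_mul, ← Real.rpow_add hq0, expo_add_expo_succ, inv_pow]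
    norm_cast
  have hb0 : (b 0)⁻¹ = ((q ^ (-c) : ℝ) : ℂ) := by
    rw [hb, expo_zero, Real.rpow_neg hq0.le, Complex.ofReal_inv]
  rw [hN, hD, ← hb0]
  exact tendsto_contA_div_contB hx (hD ▸ hne) ha hb_ne hbb
end
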